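/- arXiv:2004.11756 — 2 statements merged into one kernel-verified Lean document; each statement's English description precedes it below -/
import Mathlib

section
/- Let k > 0 and consider the function Φ(N,R_c) = 1/12 + R_c/(4(1−N²)) − (1/4)·√(N²R_c/(1−N²))·coth(N·√((1−N²)/R_c)) for 0 < N < 1 and R_c > 0. Then Φ(N,R_c) > 0. -/
/-! With `s = √((1 − N²)/R_c)` one has `R_c/(1 − N²) = 1/s²` and
`√(N² R_c/(1 − N²)) = N/s`, so the bound `coth x < 1/x + x/3` at `x = N s` gives
`(N/s) coth (N s) < 1/s² + N²/3` and hence `Φ > (1 − N²)/12 > 0`.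
The bound on `coth` is `x cosh x < (1 + x²/3) sinh x`, obtained from `sinh x < x cosh x`
by comparing derivatives twice. -/

noncomputable def Rcoth (x : ℝ) : ℝ := Real.cosh x / Real.sinh x

open Real Set

lemma pos_of_hasDerivAt_of_deriv_pos {f f' : ℝ → ℝ} (hf : ∀ y, HasDerivAt f (f' y) y)
    (hf0 : f 0 = 0) (hf' : ∀ y, 0 < y → 0 < f' y) {x : ℝ} (hx : 0 < x) : 0 < f x := by
  have hcont : Continuous f := continuous_iff_continuousAt.2 fun y => (hf y).continuousAt
  have hmono : StrictMonoOn f (Ici 0) :=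
    strictMonoOn_of_hasDerivWithinAt_pos (convex_Ici 0) hcont.continuousOn
      (fun y _ => (hf y).hasDerivWithinAt) fun y hy => hf' y (by simpa using hy)
  simpa [hf0] using hmono self_mem_Ici hx.le hx

lemma sinh_lt_mul_cosh {x : ℝ} (hx : 0 < x) : sinh x < x * cosh x := by
  have hderiv (y : ℝ) : HasDerivAt (fun y => y * cosh y - sinh y) (y * sinh y) y :=
    (((hasDerivAt_id y).mul (hasDerivAt_cosh y)).sub (hasDerivAt_sinh y)).congr_deriv
      (by simp)
  have := pos_of_hasDerivAt_of_deriv_pos hderiv (by simp)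
    (fun y hy => mul_pos hy (sinh_pos_iff.2 hy)) hx
  linarith

lemma mul_cosh_lt {x : ℝ} (hx : 0 < x) : x * cosh x < (1 + x ^ 2 / 3) * sinh x := by
  have hderiv (y : ℝ) : HasDerivAt (fun y => (1 + y ^ 2 / 3) * sinh y - y * cosh y)
      (y / 3 * (y * cosh y - sinh y)) y :=
    ((((hasDerivAt_pow 2 y).div_const 3).const_add 1).mul (hasDerivAt_sinh y) |>.sub
      ((hasDerivAt_id y).mul (hasDerivAt_cosh y))).congr_deriv
      (by simp only [Nat.cast_ofNat, Nat.add_one_sub_one, pow_one, one_mul, id_eq]; ring)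
  have := pos_of_hasDerivAt_of_deriv_pos hderiv (by simp)
    (fun y hy => mul_pos (by positivity) (sub_pos.2 (sinh_lt_mul_cosh hy))) hx
  linarith

lemma Rcoth_lt_inv_add_div_three {x : ℝ} (hx : 0 < x) : Rcoth x < x⁻¹ + x / 3 := by
  rw [Rcoth, div_lt_iff₀ (sinh_pos_iff.2 hx), ← mul_lt_mul_iff_of_pos_left hx]
  calc x * cosh x < (1 + x ^ 2 / 3) * sinh x := mul_cosh_lt hx
    _ = x * ((x⁻¹ + x / 3) * sinh x) := by field_simp

/-- Positivity of the flow factor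
`Φ(N,R_c) = 1/12 + R_c/(4(1−N²)) − (1/4)√(N²R_c/(1−N²)) coth(N√((1−N²)/R_c))`
for `0 < N < 1`, `R_c > 0`. -/
theorem flow_factor_Phi_pos (N Rc : ℝ) (hN0 : 0 < N) (hN1 : N < 1) (hRc : 0 < Rc) :
    0 < 1 / 12 + Rc / (4 * (1 - N ^ 2)) -
      (1 / 4) * Real.sqrt (N ^ 2 * Rc / (1 - N ^ 2)) *
        Rcoth (N * Real.sqrt ((1 - N ^ 2) / Rc)) := by
  have hN2 : N ^ 2 < 1 := by nlinarith
  have hpos : 0 < (1 - N ^ 2) / Rc := div_pos (by linarith) hRc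
  set s := √((1 - N ^ 2) / Rc)
  have hs0 : 0 < s := sqrt_pos.2 hpos
  have hs2 : s ^ 2 = (1 - N ^ 2) / Rc := sq_sqrt hpos.le
  have hlin : Rc / (4 * (1 - N ^ 2)) = 1 / 4 * (1 / s ^ 2) := by
    rw [hs2]
    field_simp
  have hsqrt : √(N ^ 2 * Rc / (1 - N ^ 2)) = N / s := by
    rw [show N ^ 2 * Rc / (1 - N ^ 2) = (N / s) ^ 2 by rw [div_pow, hs2]; field_simp]
    exact sqrt_sq (by positivity)
  have hcoth : N / s * Rcoth (N * s) < 1 / s ^ 2 + N ^ 2 / 3 :=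
    calc N / s * Rcoth (N * s) < N / s * ((N * s)⁻¹ + N * s / 3) :=
          mul_lt_mul_of_pos_left (Rcoth_lt_inv_add_div_three (by positivity)) (by positivity)
      _ = 1 / s ^ 2 + N ^ 2 / 3 := by field_simp
  rw [hlin, hsqrt]
  linarith
end

section
/- Let 0 < N < 1 and R_c > 0, and let k = √(4N²(1−N²)/R_c). Then ∫₀¹ [t² − t + (N²/k)(sinh(kt) − (cosh(kt)−1)·coth(k/2))] dt /(2(1−N²)) = −(1/(1−N²))·(1/12 + R_c/(4(1−N²)) − (1/4)√(N²R_c/(1−N²))·coth(N√((1−N²)/R_c))). -/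
open intervalIntegral

/-- Vertical integration of the local velocity profile in the very thin porous medium
case: with `k = √(4N²(1−N²)/R_c)`,
`∫₀¹ [t² − t + (N²/k)(sinh(kt) − (cosh(kt)−1) coth(k/2))] dt / (2(1−N²))
  = −(1/(1−N²)) Φ(N,R_c)` where
`Φ(N,R_c) = 1/12 + R_c/(4(1−N²)) − (1/4)√(N²R_c/(1−N²)) coth(N√((1−N²)/R_c))`. -/
theorem integral_velocity_profile_eq_neg_Phi
    (N Rc : ℝ) (hN0 : 0 < N) (hN1 : N < 1) (hRc : 0 < Rc)
    (k : ℝ) (hk : k = Real.sqrt (4 * N ^ 2 * (1 - N ^ 2) / Rc)) :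
    (∫ t in (0:ℝ)..1,
        (t ^ 2 - t + (N ^ 2 / k) *
          (Real.sinh (k * t) - (Real.cosh (k * t) - 1) * Rcoth (k / 2)))) / (2 * (1 - N ^ 2))
      = -(1 / (1 - N ^ 2)) *
          (1 / 12 + Rc / (4 * (1 - N ^ 2)) -
            (1 / 4) * Real.sqrt (N ^ 2 * Rc / (1 - N ^ 2)) *
              Rcoth (N * Real.sqrt ((1 - N ^ 2) / Rc))) := by
  have hN2 : 0 < 1 - N ^ 2 := by nlinarith
  have hkpos : 0 < k := by
    rw [hk]; apply Real.sqrt_pos.2; positivity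
  have hk2 : k ^ 2 = 4 * N ^ 2 * (1 - N ^ 2) / Rc := by
    rw [hk, Real.sq_sqrt (by positivity)]
  -- sqrt identities
  have hA : Real.sqrt (N ^ 2 * Rc / (1 - N ^ 2)) = 2 * N ^ 2 / k := by
    have h : (2 * N ^ 2 / k) ^ 2 = N ^ 2 * Rc / (1 - N ^ 2) := by
      field_simp [hk2]
      rw [hk2, div_mul_cancel₀ _ hRc.ne']; ring
    rw [← h, Real.sqrt_sq (by positivity)]
  have hB : N * Real.sqrt ((1 - N ^ 2) / Rc) = k / 2 := by
    have h : (k / (2 * N)) ^ 2 = (1 - N ^ 2) / Rc := by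
      field_simp [hk2]
      rw [hk2, div_mul_cancel₀ _ hRc.ne']; ring
    have : Real.sqrt ((1 - N ^ 2) / Rc) = k / (2 * N) := by
      rw [← h, Real.sqrt_sq (by positivity)]
    rw [this]; field_simp
  -- antiderivative
  set C : ℝ := Rcoth (k / 2) with hC
  have hderiv : ∀ t ∈ Set.uIcc (0:ℝ) 1,
      HasDerivAt (fun t => t ^ 3 / 3 - t ^ 2 / 2 + (N ^ 2 / k) *
          (Real.cosh (k * t) / k - (Real.sinh (k * t) / k - t) * C))
        (t ^ 2 - t + (N ^ 2 / k) *
          (Real.sinh (k * t) - (Real.cosh (k * t) - 1) * C)) t := by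
    intro t _
    have h1 : HasDerivAt (fun t : ℝ => k * t) k t := by
      simpa using (hasDerivAt_id t).const_mul k
    have hcosh : HasDerivAt (fun t : ℝ => Real.cosh (k * t)) (Real.sinh (k * t) * k) t :=
      (Real.hasDerivAt_cosh (k * t)).comp t h1
    have hsinh : HasDerivAt (fun t : ℝ => Real.sinh (k * t)) (Real.cosh (k * t) * k) t :=
      (Real.hasDerivAt_sinh (k * t)).comp t h1
    have h3 : HasDerivAt (fun t : ℝ => t ^ 3 / 3) (t ^ 2) t := by
      simpa using ((hasDerivAt_pow 3 t).div_const 3)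
    have h4 : HasDerivAt (fun t : ℝ => t ^ 2 / 2) (t : ℝ) t := by
      simpa using ((hasDerivAt_pow 2 t).div_const 2)
    have h5 := ((hcosh.div_const k).sub
      (((hsinh.div_const k).sub (hasDerivAt_id t)).mul_const C)).const_mul (N ^ 2 / k)
    have := (h3.sub h4).add h5
    convert this using 1
    · rfl
    · rfl
    · rfl
    · rw [mul_div_cancel_right₀ _ hkpos.ne', mul_div_cancel_right₀ _ hkpos.ne']
  have hcont : IntervalIntegrable (fun t =>
      t ^ 2 - t + (N ^ 2 / k) *
        (Real.sinh (k * t) - (Real.cosh (k * t) - 1) * C)) MeasureTheory.volume 0 1 := by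
    apply Continuous.intervalIntegrable
    fun_prop
  rw [intervalIntegral.integral_eq_sub_of_hasDerivAt hderiv hcont]
  simp only [mul_one, mul_zero, Real.cosh_zero, Real.sinh_zero]
  -- now pure algebra
  rw [hA, hB]
  rw [hC]
  unfold Rcoth
  have hs : 0 < Real.sinh (k / 2) := Real.sinh_pos_iff.2 (by positivity)
  set s := Real.sinh (k / 2)
  set c := Real.cosh (k / 2)
  have hck : Real.cosh k = c ^ 2 + s ^ 2 := by
    have h := Real.cosh_two_mul (k / 2)
    rw [show 2 * (k / 2) = k by ring] at h
    exact h
  have hsk : Real.sinh k = 2 * s * c := by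
    have := Real.sinh_two_mul (k / 2)
    rw [show 2 * (k / 2) = k by ring] at this
    rw [this]
  have hc2 : c ^ 2 = 1 + s ^ 2 := by
    have := Real.cosh_sq_sub_sinh_sq (k / 2)
    nlinarith
  have hRc : Rc = 4 * N ^ 2 * (1 - N ^ 2) / k ^ 2 := by
    have h := hk2
    field_simp at h ⊢
    linear_combination h
  rw [hck, hsk, hRc]
  field_simp
  linear_combination (-(288:ℝ) * s * N^2) * hc2
end
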